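/- arXiv:1908.06781 — 7 statements merged into one kernel-verified Lean document; each statement's English description precedes it below -/
import Mathlib

section
/- Fix c ∈ (0, c₁] and a compact set K ⊆ ℝ² and a compact parameter set A ⊆ ℝ, and let M be an upper bound for ‖Z₋(z,α) − Z₊(z,α)‖ on K × A. Then for all z ∈ K, α ∈ A, all y ∈ [c, c₁] and all ε ∈ (0, c₀·c], one has ‖Z(z, φ(y·ε⁻¹, ε), α) − Z₊(z, α)‖ ≤ c₃ · M · (ε/c)^k. In particular, on the region {y ≥ c} the regularized vector field Z(z, φ(y ε⁻¹, ε), α) is a perturbation of Z₊(z,α) of order O(ε^k), uniformly as ε → 0. -/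
/-!
Substituting `ε₁ = ε / y` and `r₁ = y` in (A2) gives `1 - φ(y/ε, ε) = (ε/y)^k φ₊(ε/y, y)`,
and the distance from `Z` to `Z₊` is `(1 - φ) ‖Z₋ - Z₊‖`. On `y ≥ c` the factor `(ε/y)^k` is at
most `(ε/c)^k`, and `φ₊ ≤ c₃`.
-/

open Set

theorem norm_smul_add_one_sub_smul_sub {𝕜 E : Type*} [NormedField 𝕜] [SeminormedAddCommGroup E]
    [NormedSpace 𝕜 E] (t : 𝕜) (a b : E) :
    ‖t • a + (1 - t) • b - a‖ = ‖1 - t‖ * ‖b - a‖ := by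
  rw [← norm_smul]
  congr 1
  simp only [smul_sub, sub_smul, one_smul]
  abel

theorem div_mem_Icc_of_le_mul {c₀ c y ε : ℝ} (hc : 0 < c) (hcy : c ≤ y) (hε : 0 ≤ ε)
    (hεc : ε ≤ c₀ * c) : ε / y ∈ Icc 0 c₀ := by
  have hy : 0 < y := hc.trans_le hcy
  refine ⟨div_nonneg hε hy.le, (div_le_iff₀ hy).2 ?_⟩
  have hc₀ : 0 ≤ c₀ := nonneg_of_mul_nonneg_left (hε.trans hεc) hc
  exact hεc.trans (mul_le_mul_of_nonneg_left hcy hc₀)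

section Regularization

variable {φ φp : ℝ → ℝ → ℝ} {k : ℕ} {c₀ c₁ c₂ c₃ : ℝ}

theorem one_sub_regularization_eq
    (hA2 : ∀ ε₁ ∈ Icc (0:ℝ) c₀, ∀ r₁ ∈ Icc (0:ℝ) c₁, ε₁ ≠ 0 →
      φ ε₁⁻¹ (r₁ * ε₁) = 1 - ε₁ ^ k * φp ε₁ r₁)
    {y ε : ℝ} (hy : y ∈ Ioc 0 c₁) (hε : 0 < ε) (hεy : ε / y ∈ Icc 0 c₀) :
    1 - φ (y * ε⁻¹) ε = (ε / y) ^ k * φp (ε / y) y := by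
  have h := hA2 (ε / y) hεy y ⟨hy.1.le, hy.2⟩ (div_pos hε hy.1).ne'
  rw [inv_div, mul_div_cancel₀ ε hy.1.ne', div_eq_mul_inv] at h
  rw [h, sub_sub_cancel]

theorem one_sub_regularization_mem_Icc
    (hc₂ : 0 < c₂)
    (hφpmem : ∀ ε₁ ∈ Icc (0:ℝ) c₀, ∀ r₁ ∈ Icc (0:ℝ) c₁, φp ε₁ r₁ ∈ Icc c₂ c₃)
    (hA2 : ∀ ε₁ ∈ Icc (0:ℝ) c₀, ∀ r₁ ∈ Icc (0:ℝ) c₁, ε₁ ≠ 0 →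
      φ ε₁⁻¹ (r₁ * ε₁) = 1 - ε₁ ^ k * φp ε₁ r₁)
    {c y ε : ℝ} (hc : 0 < c) (hy : y ∈ Icc c c₁) (hε : ε ∈ Ioc 0 (c₀ * c)) :
    1 - φ (y * ε⁻¹) ε ∈ Icc 0 (c₃ * (ε / c) ^ k) := by
  have hy₀ : 0 < y := hc.trans_le hy.1
  have hεy := div_mem_Icc_of_le_mul hc hy.1 hε.1.le hε.2
  obtain ⟨hc₂φ, hφc₃⟩ := hφpmem _ hεy y ⟨hy₀.le, hy.2⟩
  have hφ₀ : 0 ≤ φp (ε / y) y := hc₂.le.trans hc₂φ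
  have hpow : (ε / y) ^ k ≤ (ε / c) ^ k :=
    pow_le_pow_left₀ hεy.1 (div_le_div_of_nonneg_left hε.1.le hc hy.1) k
  rw [one_sub_regularization_eq hA2 ⟨hy₀, hy.2⟩ hε.1 hεy]
  refine ⟨mul_nonneg (pow_nonneg hεy.1 k) hφ₀, ?_⟩
  calc (ε / y) ^ k * φp (ε / y) y ≤ (ε / c) ^ k * c₃ :=
        mul_le_mul hpow hφc₃ hφ₀ (pow_nonneg (div_nonneg hε.1.le hc.le) k)
    _ = c₃ * (ε / c) ^ k := mul_comm _ _

end Regularization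

theorem regularized_perturbation_of_Zplus_general
    (Zp Zm : ℝ × ℝ → ℝ → ℝ × ℝ)
    (φ : ℝ → ℝ → ℝ) (φp : ℝ → ℝ → ℝ)
    (k : ℕ)
    (c₀ c₁ c₂ c₃ : ℝ) (hc₂ : 0 < c₂)
    (hφpmem : ∀ ε₁ ∈ Icc (0:ℝ) c₀, ∀ r₁ ∈ Icc (0:ℝ) c₁, φp ε₁ r₁ ∈ Icc c₂ c₃)
    (hA2 : ∀ ε₁ ∈ Icc (0:ℝ) c₀, ∀ r₁ ∈ Icc (0:ℝ) c₁, ε₁ ≠ 0 →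
      φ ε₁⁻¹ (r₁ * ε₁) = 1 - ε₁ ^ k * φp ε₁ r₁)
    (c : ℝ) (hc : c ∈ Ioc (0:ℝ) c₁)
    (K : Set (ℝ × ℝ))
    (A : Set ℝ)
    (M : ℝ) (hM : ∀ z ∈ K, ∀ α ∈ A, ‖Zm z α - Zp z α‖ ≤ M) :
    ∀ z ∈ K, ∀ α ∈ A, ∀ y ∈ Icc c c₁, ∀ ε ∈ Ioc (0:ℝ) (c₀ * c),
      ‖(φ (y * ε⁻¹) ε • Zp z α + (1 - φ (y * ε⁻¹) ε) • Zm z α) - Zp z α‖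
        ≤ c₃ * M * (ε / c) ^ k := by
  intro z hz α hα y hy ε hε
  obtain ⟨hφ₀, hφ⟩ := one_sub_regularization_mem_Icc hc₂ hφpmem hA2 hc.1 hy hε
  rw [norm_smul_add_one_sub_smul_sub, Real.norm_of_nonneg hφ₀]
  calc (1 - φ (y * ε⁻¹) ε) * ‖Zm z α - Zp z α‖ ≤ c₃ * (ε / c) ^ k * M :=
        mul_le_mul hφ (hM z hz α hα) (norm_nonneg _) (hφ₀.trans hφ)
    _ = c₃ * M * (ε / c) ^ k := mul_right_comm _ _ _

/-- Under (A0) and (A2), on the region `y ≥ c` the regularized vector field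
`Z(z, φ(y/ε, ε), α) = φ·Zp + (1-φ)·Zm` is an `O(ε^k)` perturbation of `Zp`,
uniformly: its distance to `Zp` is at most `c₃ * M * (ε/c)^k`. -/
theorem regularized_perturbation_of_Zplus
    (Zp Zm : ℝ × ℝ → ℝ → ℝ × ℝ)
    (φ : ℝ → ℝ → ℝ) (φp : ℝ → ℝ → ℝ)
    (k : ℕ) (hk : 1 ≤ k)
    (c₀ c₁ c₂ c₃ : ℝ) (hc₀ : 0 < c₀) (hc₁ : 0 < c₁) (hc₂ : 0 < c₂) (hc₂₃ : c₂ ≤ c₃)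
    (hφpmem : ∀ ε₁ ∈ Icc (0:ℝ) c₀, ∀ r₁ ∈ Icc (0:ℝ) c₁, φp ε₁ r₁ ∈ Icc c₂ c₃)
    (hA2 : ∀ ε₁ ∈ Icc (0:ℝ) c₀, ∀ r₁ ∈ Icc (0:ℝ) c₁, ε₁ ≠ 0 →
      φ ε₁⁻¹ (r₁ * ε₁) = 1 - ε₁ ^ k * φp ε₁ r₁)
    (c : ℝ) (hc : c ∈ Ioc (0:ℝ) c₁)
    (K : Set (ℝ × ℝ)) (hK : IsCompact K)
    (A : Set ℝ) (hA : IsCompact A)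
    (M : ℝ) (hM : ∀ z ∈ K, ∀ α ∈ A, ‖Zm z α - Zp z α‖ ≤ M) :
    ∀ z ∈ K, ∀ α ∈ A, ∀ y ∈ Icc c c₁, ∀ ε ∈ Ioc (0:ℝ) (c₀ * c),
      ‖(φ (y * ε⁻¹) ε • Zp z α + (1 - φ (y * ε⁻¹) ε) • Zm z α) - Zp z α‖
        ≤ c₃ * M * (ε / c) ^ k :=
  regularized_perturbation_of_Zplus_general Zp Zm φ φp k c₀ c₁ c₂ c₃ hc₂ hφpmem hA2 c hc K A M hM
end

section
/- X(0, −1, 0) = 0 and X(0, 1, 0) = 0, i.e. p_L = (0,−1,0) and p_R = (0,1,0) are equilibria of X. Moreover the Jacobian matrix DX(0,−1,0) has characteristic polynomial (λ + 1/k)·(λ − 2)·(λ − (2 + 1/k)), so its eigenvalues are −1/k, 2 and 2 + 1/k; and the Jacobian matrix DX(0,1,0) has characteristic polynomial (λ + 2 + 1/k)·(λ + 2)·(λ − 1/k), so its eigenvalues are −2 − 1/k, −2 and 1/k. In particular both equilibria are hyperbolic. -/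
open Polynomial

/-- The blown-up visible-fold vector field in the directional chart `r̄ = 1`
of the spherical blowup. -/
noncomputable def chartRVF (k : ℕ) (f₁ g₁ φp : ℝ × ℝ → ℝ) (v : Fin 3 → ℝ) : Fin 3 → ℝ :=
  ![(1 / (2 * (k : ℝ))) * v 0 *
      ((1 - v 0 ^ k * v 2 ^ k * φp (v 0 ^ (2 * k), v 0 * v 2)) *
          (2 * v 1 + v 0 ^ k * g₁ (v 0 ^ k, v 1)) +
        v 2 ^ k * φp (v 0 ^ (2 * k), v 0 * v 2)),
    (1 - v 0 ^ k * v 2 ^ k * φp (v 0 ^ (2 * k), v 0 * v 2)) *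
        (1 + v 0 ^ k * f₁ (v 0 ^ k, v 1)) -
      (1 / 2) *
        ((1 - v 0 ^ k * v 2 ^ k * φp (v 0 ^ (2 * k), v 0 * v 2)) *
            (2 * v 1 + v 0 ^ k * g₁ (v 0 ^ k, v 1)) +
          v 2 ^ k * φp (v 0 ^ (2 * k), v 0 * v 2)) * v 1,
    -((2 * (k : ℝ) + 1) / (2 * (k : ℝ))) *
        ((1 - v 0 ^ k * v 2 ^ k * φp (v 0 ^ (2 * k), v 0 * v 2)) *
            (2 * v 1 + v 0 ^ k * g₁ (v 0 ^ k, v 1)) +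
          v 2 ^ k * φp (v 0 ^ (2 * k), v 0 * v 2)) * v 2]

/-! At `p_s = (0, s, 0)` both blow-up coordinates `ρ = v 0` and `ε = v 2` vanish, and every term
of `X` involving `f₁`, `g₁`, `φ₊` carries a factor `ρ ^ k` or `ε ^ k`. A product `u * h` with
`u p = 0` has derivative `h p • Du(p)` as soon as `h` is merely continuous at `p`, so only the
values of `f₁`, `g₁`, `φ₊` at `p_s` enter the Jacobian. This gives `X(p_s) = (0, 1 - s², 0)` and a Jacobian
whose first and last rows are diagonal, with diagonal `s / k`, `-2s`, `-(2k + 1) s / k`; its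
characteristic polynomial splits accordingly, and `s = ∓1` gives `p_L` and `p_R`. -/

open Asymptotics Filter Topology

theorem HasFDerivAt.mul_of_eq_zero_of_continuousAt {𝕜 E : Type*} [NontriviallyNormedField 𝕜]
    [NormedAddCommGroup E] [NormedSpace 𝕜 E] {u h : E → 𝕜} {u' : E →L[𝕜] 𝕜} {p : E}
    (hu : HasFDerivAt u u' p) (hu₀ : u p = 0) (hh : ContinuousAt h p) :
    HasFDerivAt (fun x ↦ u x * h x) (h p • u') p := by
  rw [hasFDerivAt_iff_isLittleO]
  have hu_O : u =O[𝓝 p] fun x ↦ ‖x - p‖ := by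
    simpa [hu₀] using hu.isBigO_sub.norm_right
  have hh_o : (fun x ↦ h x - h p) =o[𝓝 p] fun _ ↦ (1 : ℝ) :=
    (isLittleO_one_iff ℝ).mpr (by simpa using hh.sub_const (h p))
  have hprod : (fun x ↦ u x * (h x - h p)) =o[𝓝 p] fun x ↦ ‖x - p‖ := by
    simpa using hu_O.mul_isLittleO hh_o
  refine (hprod.add (hu.isLittleO.const_mul_left (h p)).norm_right).of_norm_right.congr_left
    fun x ↦ ?_
  simp only [hu₀, zero_mul, sub_zero, smul_apply, smul_eq_mul]
  ring

theorem hasFDerivAt_apply_pow_of_eq_zero {𝕜 ι : Type*} [NontriviallyNormedField 𝕜] [Fintype ι]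
    (k : ℕ) (i : ι) {p : ι → 𝕜} (hp : p i = 0) :
    HasFDerivAt (fun v : ι → 𝕜 ↦ v i ^ k)
      (((k : 𝕜) * 0 ^ (k - 1)) • ContinuousLinearMap.proj (R := 𝕜) (φ := fun _ ↦ 𝕜) i) p := by
  simpa [hp] using (hasFDerivAt_apply (𝕜 := 𝕜) i p).pow k

theorem Matrix.charpoly_fin_three_of_outer_rows_diagonal {R : Type*} [CommRing R]
    (a b c d e : R) :
    (!![a, 0, 0; d, b, e; 0, 0, c] : Matrix (Fin 3) (Fin 3) R).charpoly =
      (X - C a) * (X - C b) * (X - C c) := by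
  rw [Matrix.charpoly, Matrix.det_fin_three]
  simp

/- With `v = (ρ, x, ε)`, `chartRFactor` is the factor `1 - ρ^k ε^k Φ(ρ, ε)` and `chartRF` is the
function `F(ρ, x, ε)` of the vector field. -/
noncomputable def chartRFactor (k : ℕ) (φp : ℝ × ℝ → ℝ) (v : Fin 3 → ℝ) : ℝ :=
  1 - v 0 ^ k * v 2 ^ k * φp (v 0 ^ (2 * k), v 0 * v 2)

noncomputable def chartRF (k : ℕ) (g₁ φp : ℝ × ℝ → ℝ) (v : Fin 3 → ℝ) : ℝ :=
  chartRFactor k φp v * (2 * v 1 + v 0 ^ k * g₁ (v 0 ^ k, v 1)) +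
    v 2 ^ k * φp (v 0 ^ (2 * k), v 0 * v 2)

/- `k * 0 ^ (k - 1)` is the derivative of `ρ ↦ ρ ^ k` at `0`: it is `1` for `k = 1` and `0`
otherwise. -/
noncomputable def chartRJacobian (k : ℕ) (f₁ g₁ φp : ℝ × ℝ → ℝ) (s : ℝ) :
    Matrix (Fin 3) (Fin 3) ℝ :=
  !![s / k, 0, 0;
    k * 0 ^ (k - 1) * f₁ (0, s) - s / 2 * (k * 0 ^ (k - 1) * g₁ (0, s)), -(2 * s),
      -(s / 2 * (k * 0 ^ (k - 1) * φp (0, 0)));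
    0, 0, -((2 * k + 1) * s / k)]

section Chart

variable {k : ℕ} {f₁ g₁ φp : ℝ × ℝ → ℝ}

theorem chartRVF_eq (v : Fin 3 → ℝ) :
    chartRVF k f₁ g₁ φp v =
      ![1 / (2 * (k : ℝ)) * v 0 * chartRF k g₁ φp v,
        chartRFactor k φp v * (1 + v 0 ^ k * f₁ (v 0 ^ k, v 1)) -
          1 / 2 * chartRF k g₁ φp v * v 1,
        -((2 * (k : ℝ) + 1) / (2 * (k : ℝ))) * chartRF k g₁ φp v * v 2] :=
  rfl

theorem chartRJacobian_charpoly (s : ℝ) :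
    (chartRJacobian k f₁ g₁ φp s).charpoly =
      (X - C (s / k)) * (X - C (-(2 * s))) * (X - C (-((2 * k + 1) * s / k))) :=
  Matrix.charpoly_fin_three_of_outer_rows_diagonal ..

variable (hk : k ≠ 0) (s : ℝ)
include hk

theorem chartRFactor_apply : chartRFactor k φp ![0, s, 0] = 1 := by
  simp [chartRFactor, zero_pow hk]

theorem chartRF_apply : chartRF k g₁ φp ![0, s, 0] = 2 * s := by
  simp [chartRF, chartRFactor_apply hk, zero_pow hk]

theorem chartRVF_apply : chartRVF k f₁ g₁ φp ![0, s, 0] = ![0, 1 - s ^ 2, 0] := by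
  ext i
  fin_cases i <;> simp [chartRVF_eq, chartRF_apply hk, chartRFactor_apply hk, zero_pow hk]
  ring

theorem chartRFactor_hasFDerivAt (hφp : Continuous φp) :
    HasFDerivAt (chartRFactor k φp) (0 : (Fin 3 → ℝ) →L[ℝ] ℝ) ![0, s, 0] := by
  have hpow := (hasFDerivAt_apply_pow_of_eq_zero k 0 (p := ![0, s, 0]) rfl).mul
    (hasFDerivAt_apply_pow_of_eq_zero k 2 (p := ![0, s, 0]) rfl)
  have hΦ : ContinuousAt (fun v : Fin 3 → ℝ ↦ φp (v 0 ^ (2 * k), v 0 * v 2)) ![0, s, 0] := by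
    fun_prop
  exact ((hpow.mul_of_eq_zero_of_continuousAt (by simp [hk]) hΦ).const_sub 1).congr_fderiv
    (by simp [zero_pow hk])

local notation "𝐞" i => (ContinuousLinearMap.proj i : (Fin 3 → ℝ) →L[ℝ] ℝ)

theorem chartRF_hasFDerivAt (hg₁ : Continuous g₁) (hφp : Continuous φp) :
    HasFDerivAt (chartRF k g₁ φp)
      (((k : ℝ) * 0 ^ (k - 1) * g₁ (0, s)) • (𝐞 0) + (2 : ℝ) • (𝐞 1) +
        ((k : ℝ) * 0 ^ (k - 1) * φp (0, 0)) • (𝐞 2)) ![0, s, 0] := by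
  have hG : HasFDerivAt (fun v : Fin 3 → ℝ ↦ 2 * v 1 + v 0 ^ k * g₁ (v 0 ^ k, v 1))
      ((2 : ℝ) • (𝐞 1) + g₁ (0, s) • ((k : ℝ) * 0 ^ (k - 1)) • (𝐞 0)) ![0, s, 0] :=
    (((hasFDerivAt_apply (𝕜 := ℝ) 1 ![0, s, 0]).const_mul (2 : ℝ)).add
      ((hasFDerivAt_apply_pow_of_eq_zero k 0 (p := ![0, s, 0]) rfl).mul_of_eq_zero_of_continuousAt
        (by simp [hk]) (h := fun v ↦ g₁ (v 0 ^ k, v 1)) (by fun_prop))).congr_fderiv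
      (by simp [zero_pow hk])
  have hΦ := (hasFDerivAt_apply_pow_of_eq_zero k 2 (p := ![0, s, 0]) rfl
    ).mul_of_eq_zero_of_continuousAt (by simp [hk]) (h := fun v ↦ φp (v 0 ^ (2 * k), v 0 * v 2))
    (by fun_prop)
  refine (((chartRFactor_hasFDerivAt hk s hφp).mul hG).add hΦ).congr_fderiv
    (ContinuousLinearMap.ext fun w ↦ ?_)
  simp [chartRFactor_apply hk, zero_pow, hk]
  ring

theorem chartRVF_hasFDerivAt (hf₁ : Continuous f₁) (hg₁ : Continuous g₁) (hφp : Continuous φp) :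
    HasFDerivAt (chartRVF k f₁ g₁ φp)
      (Matrix.toLin' (chartRJacobian k f₁ g₁ φp s)).toContinuousLinearMap ![0, s, 0] := by
  have hF := chartRF_hasFDerivAt hk s hg₁ hφp
  rw [hasFDerivAt_pi']
  intro i
  fin_cases i <;> simp only [chartRVF_eq]
  · refine (((hasFDerivAt_apply (𝕜 := ℝ) 0 ![0, s, 0]).const_mul (1 / (2 * (k : ℝ)))
      ).mul_of_eq_zero_of_continuousAt (by simp) hF.continuousAt).congr_fderiv
      (ContinuousLinearMap.ext fun w ↦ ?_)
    simp [chartRF_apply hk, chartRJacobian, dotProduct, Fin.sum_univ_three]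
    ring
  · have hf := ((hasFDerivAt_apply_pow_of_eq_zero k 0 (p := ![0, s, 0]) rfl
      ).mul_of_eq_zero_of_continuousAt (by simp [hk]) (h := fun v ↦ f₁ (v 0 ^ k, v 1))
      (by fun_prop)).const_add 1
    refine (((chartRFactor_hasFDerivAt hk s hφp).mul hf).sub
      ((hF.const_mul (1 / 2 : ℝ)).mul (hasFDerivAt_apply (𝕜 := ℝ) 1 ![0, s, 0]))).congr_fderiv
      (ContinuousLinearMap.ext fun w ↦ ?_)
    simp [chartRF_apply hk, chartRFactor_apply hk, chartRJacobian, dotProduct,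
      Fin.sum_univ_three, zero_pow, hk]
    ring
  · refine ((hF.const_mul (-((2 * (k : ℝ) + 1) / (2 * (k : ℝ))))).mul
      (hasFDerivAt_apply (𝕜 := ℝ) 2 ![0, s, 0])).congr_fderiv (ContinuousLinearMap.ext fun w ↦ ?_)
    simp [chartRF_apply hk, chartRJacobian, dotProduct, Fin.sum_univ_three,
      -mul_eq_mul_right_iff]
    ring

end Chart

/-- The points `p_L = (0,−1,0)` and `p_R = (0,1,0)` are equilibria of the
blown-up vector field `X`, and the Jacobians `DX(p_L)`, `DX(p_R)` have characteristic
polynomials `(λ + 1/k)(λ − 2)(λ − (2 + 1/k))` and `(λ + 2 + 1/k)(λ + 2)(λ − 1/k)`,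
respectively; in particular both equilibria are hyperbolic. -/
theorem visible_fold_pL_pR_hyperbolic (k : ℕ) (hk : 1 ≤ k)
    (f₁ g₁ φp : ℝ × ℝ → ℝ)
    (hf₁ : ContDiff ℝ 1 f₁) (hg₁ : ContDiff ℝ 1 g₁) (hφp : ContDiff ℝ 1 φp) :
    chartRVF k f₁ g₁ φp ![0, -1, 0] = 0 ∧
    chartRVF k f₁ g₁ φp ![0, 1, 0] = 0 ∧
    (∃ J : Matrix (Fin 3) (Fin 3) ℝ,
      HasFDerivAt (chartRVF k f₁ g₁ φp)
        (LinearMap.toContinuousLinearMap (Matrix.toLin' J)) ![0, -1, 0] ∧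
      J.charpoly = (X + C (1 / (k : ℝ))) * (X - C 2) * (X - C (2 + 1 / (k : ℝ)))) ∧
    (∃ J : Matrix (Fin 3) (Fin 3) ℝ,
      HasFDerivAt (chartRVF k f₁ g₁ φp)
        (LinearMap.toContinuousLinearMap (Matrix.toLin' J)) ![0, 1, 0] ∧
      J.charpoly = (X + C (2 + 1 / (k : ℝ))) * (X + C 2) * (X - C (1 / (k : ℝ)))) := by
  have hk₀ : k ≠ 0 := Nat.one_le_iff_ne_zero.mp hk
  have hJ (s : ℝ) := chartRVF_hasFDerivAt hk₀ s hf₁.continuous hg₁.continuous hφp.continuous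
  have hcoeff : 2 * (k : ℝ) + 1 = (2 + 1 / k) * k := by field_simp
  refine ⟨by simp [chartRVF_apply hk₀], by simp [chartRVF_apply hk₀],
    ⟨_, hJ (-1), ?_⟩, ⟨_, hJ 1, ?_⟩⟩
  · rw [chartRJacobian_charpoly, hcoeff]
    simp [neg_div, hk₀]
  · rw [chartRJacobian_charpoly, hcoeff]
    simp [hk₀]
    ring
end

section
/- Let (x₁, ε₁) : J → ℝ × (0,∞) be a differentiable solution, on an interval J, of the planar system x₁' = 1 − (1/2)·(2x₁ + ε₁^k·φ₊)·x₁, ε₁' = −((2k+1)/(2k))·(2x₁ + ε₁^k·φ₊)·ε₁. Define u(t) = (φ₊·ε₁(t)^k)^{−1/(2k+1)}·x₁(t) and v(t) = (φ₊·ε₁(t)^k)^{−2/(2k+1)}. Then v(t) > 0 for all t ∈ J and (u, v) satisfies u' = v^{1/2} and v' = v^{1/2}·(2u + v^{−k}) on J. -/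
open Set

/-- If `(x₁, ε₁)` solves `x₁' = 1 − (1/2)(2x₁ + ε₁^k φ₊)x₁`,
`ε₁' = −((2k+1)/(2k))(2x₁ + ε₁^k φ₊)ε₁` on an interval `J` with `ε₁ > 0`, then
`u = (φ₊ ε₁^k)^{−1/(2k+1)} x₁`, `v = (φ₊ ε₁^k)^{−2/(2k+1)}` satisfy `v > 0` and
`u' = v^{1/2}`, `v' = v^{1/2}(2u + v^{−k})` on `J`. -/
theorem chini_transformation (k : ℕ) (hk : 1 ≤ k) (φp : ℝ) (hφp : 0 < φp)
    (J : Set ℝ) (hJ : J.OrdConnected)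
    (x₁ ε₁ : ℝ → ℝ)
    (hε₁pos : ∀ t ∈ J, 0 < ε₁ t)
    (hx₁ : ∀ t ∈ J,
      HasDerivAt x₁ (1 - (1 / 2) * (2 * x₁ t + ε₁ t ^ k * φp) * x₁ t) t)
    (hε₁ : ∀ t ∈ J,
      HasDerivAt ε₁
        (-((2 * (k : ℝ) + 1) / (2 * (k : ℝ))) * (2 * x₁ t + ε₁ t ^ k * φp) * ε₁ t) t) :
    ∀ t ∈ J,
      0 < (φp * ε₁ t ^ k) ^ (-(2 : ℝ) / (2 * (k : ℝ) + 1)) ∧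
      HasDerivAt (fun s => (φp * ε₁ s ^ k) ^ (-(1 : ℝ) / (2 * (k : ℝ) + 1)) * x₁ s)
        (Real.sqrt ((φp * ε₁ t ^ k) ^ (-(2 : ℝ) / (2 * (k : ℝ) + 1)))) t ∧
      HasDerivAt (fun s => (φp * ε₁ s ^ k) ^ (-(2 : ℝ) / (2 * (k : ℝ) + 1)))
        (Real.sqrt ((φp * ε₁ t ^ k) ^ (-(2 : ℝ) / (2 * (k : ℝ) + 1))) *
          (2 * ((φp * ε₁ t ^ k) ^ (-(1 : ℝ) / (2 * (k : ℝ) + 1)) * x₁ t) +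
            ((φp * ε₁ t ^ k) ^ (-(2 : ℝ) / (2 * (k : ℝ) + 1))) ^ (-(k : ℤ)))) t := by
  intro t ht
  have hKpos : (0:ℝ) < (k:ℝ) := by
    have : (1:ℝ) ≤ (k:ℝ) := by exact_mod_cast hk
    linarith
  have hKne : (k:ℝ) ≠ 0 := ne_of_gt hKpos
  have hE : 0 < ε₁ t := hε₁pos t ht
  have hW : 0 < φp * ε₁ t ^ k := by positivity
  have hWne : φp * ε₁ t ^ k ≠ 0 := ne_of_gt hW
  have hr : (0:ℝ) < 2 * (k:ℝ) + 1 := by positivity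
  have hrne : (2 * (k:ℝ) + 1) ≠ 0 := ne_of_gt hr
  set X := x₁ t with hX
  set E := ε₁ t with hEd
  set W := φp * E ^ k with hWdef
  have hcomm : E ^ k * φp = W := by rw [hWdef]; ring
  have hEk : E ^ (k - 1) * E = E ^ k := by
    rw [← pow_succ]; congr 1; omega
  -- derivative of W
  have hw : HasDerivAt (fun s => φp * ε₁ s ^ k)
      (-((2 * (k:ℝ) + 1) / 2) * (2 * X + W) * W) t := by
    have h := ((hε₁ t ht).pow k).const_mul φp
    refine h.congr_deriv ?_
    symm
    rw [hWdef, ← hEk]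
    field_simp
    ring
  -- basic rpow identities
  have hstep : ∀ p : ℝ, W ^ (p - 1) * W = W ^ p := by
    intro p
    rw [← Real.rpow_add_one hWne, sub_add_cancel]
  have hsqrt : Real.sqrt (W ^ (-(2:ℝ) / (2 * (k:ℝ) + 1)))
      = W ^ (-(1:ℝ) / (2 * (k:ℝ) + 1)) := by
    rw [Real.sqrt_eq_rpow, ← Real.rpow_mul hW.le]
    congr 1
    field_simp
  have hST : W ^ (-(1:ℝ) / (2 * (k:ℝ) + 1)) * W ^ (-(1:ℝ) / (2 * (k:ℝ) + 1))
      = W ^ (-(2:ℝ) / (2 * (k:ℝ) + 1)) := by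
    rw [← Real.rpow_add hW]
    congr 1
    ring
  have hzpow : W ^ (-(1:ℝ) / (2 * (k:ℝ) + 1)) * (W ^ (-(2:ℝ) / (2 * (k:ℝ) + 1))) ^ (-(k:ℤ))
      = W ^ ((-(2:ℝ) / (2 * (k:ℝ) + 1)) + 1) := by
    rw [← Real.rpow_intCast (W ^ (-(2:ℝ) / (2 * (k:ℝ) + 1))) (-(k:ℤ)),
      ← Real.rpow_mul hW.le, ← Real.rpow_add hW]
    congr 1
    push_cast
    field_simp
    ring
  have hb1 : W ^ ((-(2:ℝ) / (2 * (k:ℝ) + 1)) + 1)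
      = W ^ (-(2:ℝ) / (2 * (k:ℝ) + 1)) * W := Real.rpow_add_one hWne _
  have hscal1 : -((2 * (k:ℝ) + 1) / 2) * (-(2:ℝ) / (2 * (k:ℝ) + 1)) = 1 := by
    field_simp
  have hscal2 : -((2 * (k:ℝ) + 1) / 2) * (-(1:ℝ) / (2 * (k:ℝ) + 1)) = 1 / 2 := by
    field_simp
  refine ⟨Real.rpow_pos_of_pos hW _, ?_, ?_⟩
  · have hu := (hw.rpow_const (p := -(1:ℝ) / (2 * (k:ℝ) + 1)) (Or.inl hWne)).mul (hx₁ t ht)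
    refine hu.congr_deriv ?_
    symm
    rw [hsqrt, hcomm]
    linear_combination (-(2 * X + W) * W * (W ^ ((-(1:ℝ) / (2 * (k:ℝ) + 1)) - 1)) * X) * hscal2
      + (-(1/2) * (2 * X + W) * X) * (hstep (-(1:ℝ) / (2 * (k:ℝ) + 1)))
  · have hv := hw.rpow_const (p := -(2:ℝ) / (2 * (k:ℝ) + 1)) (Or.inl hWne)
    convert hv using 1
    rw [hsqrt]
    linear_combination (2 * X) * hST + hzpow + hb1
      + (-(2 * X + W) * W * (W ^ ((-(2:ℝ) / (2 * (k:ℝ) + 1)) - 1))) * hscal1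
      + (-(2 * X + W)) * (hstep (-(2:ℝ) / (2 * (k:ℝ) + 1)))
end

section
/- Let k ≥ 1 be an integer, let v : [0,∞) → ℝ be continuous with v(t) > 0 for all t, and let w : [0,∞) → ℝ be differentiable with w(0) < 0 and w'(t) = 2 − k·v(t)^{−k−1}·w(t) for all t ≥ 0. Then there exists a unique t* > 0 such that w(t*) = 0; moreover w(t) < 0 for all t ∈ [0, t*) and w(t) > 0 for all t > t*. -/
open Set Filter Topology

/-- If `v > 0` is continuous on `[0,∞)` and `w` solves
`w' = 2 − k·v^{−k−1}·w` on `[0,∞)` with `w(0) < 0`, then there is a unique `t* > 0` with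
`w(t*) = 0`; moreover `w < 0` on `[0, t*)` and `w > 0` on `(t*, ∞)`. -/
theorem chini_w_unique_zero (k : ℕ) (hk : 1 ≤ k) (v w : ℝ → ℝ)
    (hv : ContinuousOn v (Ici 0)) (hvpos : ∀ t ∈ Ici (0 : ℝ), 0 < v t)
    (hw0 : w 0 < 0)
    (hw : ∀ t ∈ Ici (0 : ℝ),
      HasDerivWithinAt w (2 - (k : ℝ) * v t ^ (-(k : ℤ) - 1) * w t) (Ici 0) t) :
    ∃ tstar : ℝ, 0 < tstar ∧ w tstar = 0 ∧
      (∀ t : ℝ, 0 < t → w t = 0 → t = tstar) ∧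
      (∀ t ∈ Ico (0 : ℝ) tstar, w t < 0) ∧
      (∀ t : ℝ, tstar < t → 0 < w t) := by
  have hwc : ContinuousOn w (Ici 0) := fun t ht => (hw t ht).continuousWithinAt
  -- growth lemma: while w ≤ 0, w grows with slope at least 2
  have grow : ∀ a b : ℝ, 0 ≤ a → a ≤ b → (∀ t ∈ Icc a b, w t ≤ 0) →
      2 * (b - a) ≤ w b - w a := by
    intro a b ha hab hneg
    have hsub : Icc a b ⊆ Ici 0 := fun x hx => le_trans ha hx.1
    have hmono : MonotoneOn (fun t => w t - 2 * t) (Icc a b) := by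
      apply monotoneOn_of_hasDerivWithinAt_nonneg (convex_Icc a b)
        (f' := fun x => -((k : ℝ) * v x ^ (-(k : ℤ) - 1) * w x))
      · exact (hwc.mono hsub).sub (continuousOn_const.mul continuousOn_id)
      · intro x hx
        rw [interior_Icc] at hx
        have hx' : x ∈ Ici (0 : ℝ) := hsub (Ioo_subset_Icc_self hx)
        have h2 : HasDerivWithinAt (fun t : ℝ => 2 * t) 2 (Ioo a b) x := by
          simpa using ((hasDerivAt_id x).const_mul 2).hasDerivWithinAt
        have hd := ((hw x hx').mono ((Ioo_subset_Icc_self).trans hsub)).sub h2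
        rw [interior_Icc]
        convert hd using 1
        · rfl
        · rfl
        · rfl
        · ring
      · intro x hx
        rw [interior_Icc] at hx
        have hx' : x ∈ Ici (0 : ℝ) := hsub (Ioo_subset_Icc_self hx)
        have hvp : 0 < v x ^ (-(k : ℤ) - 1) := zpow_pos (hvpos x hx') _
        have hwle : w x ≤ 0 := hneg x (Ioo_subset_Icc_self hx)
        have hk0 : (0 : ℝ) ≤ (k : ℝ) := Nat.cast_nonneg k
        have : (k : ℝ) * v x ^ (-(k : ℤ) - 1) * w x ≤ 0 :=
          mul_nonpos_of_nonneg_of_nonpos (mul_nonneg hk0 hvp.le) hwle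
        linarith
    have := hmono (left_mem_Icc.2 hab) (right_mem_Icc.2 hab) hab
    simp only at this
    linarith
  -- limit lemma : if w ≤ 0 on s and x ∈ closure s, then w x ≤ 0
  have lim_le : ∀ (s : Set ℝ) (x : ℝ), s ⊆ Ici 0 → x ∈ Ici 0 → x ∈ closure s →
      (∀ t ∈ s, w t ≤ 0) → w x ≤ 0 := by
    intro s x hs hx hcl hle
    have hne : (𝓝[s] x).NeBot := mem_closure_iff_nhdsWithin_neBot.1 hcl
    have ht : Tendsto w (𝓝[s] x) (𝓝 (w x)) := (hwc x hx).mono hs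
    exact le_of_tendsto ht (eventually_nhdsWithin_of_forall hle)
  -- once nonnegative, stays nonnegative
  have stay : ∀ a b : ℝ, 0 ≤ a → a ≤ b → 0 ≤ w a → 0 ≤ w b := by
    intro a b ha hab hwa
    by_contra hb
    push_neg at hb
    set T := Icc a b ∩ w ⁻¹' (Ici 0) with hT
    have hsub : Icc a b ⊆ Ici 0 := fun x hx => le_trans ha hx.1
    have hTc : IsClosed T :=
      (hwc.mono hsub).preimage_isClosed_of_isClosed isClosed_Icc isClosed_Ici
    have hTne : T.Nonempty := ⟨a, ⟨le_rfl, hab⟩, hwa⟩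
    have hTbdd : BddAbove T := ⟨b, fun t ht => ht.1.2⟩
    set c := sSup T with hc
    have hcT : c ∈ T := hTc.csSup_mem hTne hTbdd
    have hca : a ≤ c := le_csSup hTbdd ⟨⟨le_rfl, hab⟩, hwa⟩
    have hcb : c ≤ b := hcT.1.2
    have hcb' : c < b := by
      rcases hcb.lt_or_eq with h | h
      · exact h
      · exact absurd (h ▸ hcT.2) (not_le.2 hb)
    have hnegIoc : ∀ t ∈ Ioc c b, w t < 0 := by
      intro t ht
      by_contra hle
      push_neg at hle
      have : t ∈ T := ⟨⟨hca.trans ht.1.le, ht.2⟩, hle⟩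
      exact absurd (le_csSup hTbdd this) (not_le.2 ht.1)
    have hc0 : (0 : ℝ) ≤ c := ha.trans hca
    have hwcle : w c ≤ 0 := by
      apply lim_le (Ioc c b) c (fun x hx => (hc0.trans hx.1.le)) hc0
      · rw [closure_Ioc hcb'.ne]
        exact ⟨le_rfl, hcb⟩
      · exact fun t ht => (hnegIoc t ht).le
    have hnegIcc : ∀ t ∈ Icc c b, w t ≤ 0 := by
      intro t ht
      rcases eq_or_lt_of_le ht.1 with h | h
      · exact h ▸ hwcle
      · exact (hnegIoc t ⟨h, ht.2⟩).le
    have := grow c b hc0 hcb hnegIcc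
    have hwc0 : 0 ≤ w c := hcT.2
    linarith
  -- once nonnegative, strictly positive afterwards
  have strict : ∀ a b : ℝ, 0 ≤ a → a < b → 0 ≤ w a → 0 < w b := by
    intro a b ha hab hwa
    by_contra hb
    push_neg at hb
    have hwb : w b = 0 := le_antisymm hb (stay a b ha hab.le hwa)
    have hge : ∀ t ∈ Icc a b, 0 ≤ w t := fun t ht => stay a t ha ht.1 hwa
    have hb0 : (0 : ℝ) ≤ b := ha.trans hab.le
    have hd := hw b hb0
    rw [hwb] at hd
    simp only [mul_zero, sub_zero] at hd
    have hslope := hasDerivWithinAt_iff_tendsto_slope.1 hd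
    have hsub : Ico a b ⊆ Ici 0 \ {b} :=
      fun t ht => ⟨ha.trans ht.1, fun h => absurd (h ▸ ht.2) (lt_irrefl b)⟩
    have hneb : (𝓝[Ico a b] b).NeBot := by
      refine mem_closure_iff_nhdsWithin_neBot.1 ?_
      rw [closure_Ico hab.ne]
      exact ⟨hab.le, le_rfl⟩
    have htend : Tendsto (slope w b) (𝓝[Ico a b] b) (𝓝 2) :=
      hslope.mono_left (nhdsWithin_mono b hsub)
    have hle2 : (2 : ℝ) ≤ 0 := by
      apply le_of_tendsto htend
      apply eventually_nhdsWithin_of_forall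
      intro t ht
      rw [slope_def_field]
      have hwt : 0 ≤ w t := hge t ⟨ht.1, ht.2.le⟩
      exact div_nonpos_of_nonneg_of_nonpos (by rw [hwb]; linarith) (by linarith [ht.2])
    linarith
  -- there is a point where w is nonnegative
  have hSex : ∃ t : ℝ, 0 ≤ t ∧ 0 ≤ w t := by
    by_contra h
    push_neg at h
    set T0 : ℝ := 1 - w 0 / 2 with hT0def
    have hT0 : 0 ≤ T0 := by simp only [hT0def]; linarith
    have hgrow := grow 0 T0 le_rfl hT0 (fun t ht => (h t ht.1).le)
    have hwT0 : w T0 < 0 := h T0 hT0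
    simp only [hT0def] at hgrow hwT0
    linarith
  obtain ⟨t0, ht0, hwt0⟩ := hSex
  set S := Ici (0 : ℝ) ∩ w ⁻¹' (Ici 0) with hS
  have hScl : IsClosed S :=
    hwc.preimage_isClosed_of_isClosed isClosed_Ici isClosed_Ici
  have hSne : S.Nonempty := ⟨t0, ht0, hwt0⟩
  have hSbdd : BddBelow S := ⟨0, fun t ht => ht.1⟩
  set tstar := sInf S with htsdef
  have htS : tstar ∈ S := hScl.csInf_mem hSne hSbdd
  have hts0 : 0 ≤ tstar := htS.1
  have hwts : 0 ≤ w tstar := htS.2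
  have hneg : ∀ t ∈ Ico (0 : ℝ) tstar, w t < 0 := by
    intro t ht
    by_contra hle
    push_neg at hle
    exact absurd (csInf_le hSbdd ⟨ht.1, hle⟩) (not_le.2 ht.2)
  have htpos : 0 < tstar := by
    rcases hts0.lt_or_eq with h | h
    · exact h
    · exact absurd (h ▸ hwts) (not_le.2 hw0)
  have hzero : w tstar = 0 := by
    refine le_antisymm ?_ hwts
    apply lim_le (Ico 0 tstar) tstar (fun x hx => hx.1) hts0
    · rw [closure_Ico htpos.ne]
      exact ⟨hts0, le_rfl⟩
    · exact fun t ht => (hneg t ht).le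
  refine ⟨tstar, htpos, hzero, ?_, hneg, fun t ht => strict tstar t hts0 ht hzero.ge⟩
  intro t htp hwt
  by_contra hne
  rcases lt_or_gt_of_ne hne with h | h
  · exact absurd hwt (ne_of_lt (hneg t ⟨htp.le, h⟩))
  · exact absurd hwt.symm (ne_of_lt (strict tstar t hts0 h hzero.ge))
end

section
/- Let k ≥ 1 be an integer and t* > 0. Let v : [0, t*] → ℝ be continuous with v(t) > 0 for all t, let v₁ : [0, t*] → ℝ be continuous with v₁(t) > 0 for all t ∈ (0, t*], and let w : [0, t*] → ℝ be continuous with w(t) < 0 for all t ∈ [0, t*) and w(t*) = 0. Suppose w₁ : [0, t*] → ℝ is differentiable with w₁(0) = 4 and w₁'(t) = −k·v(t)^{−k−1}·w₁(t) + k·(k+1)·v(t)^{−k−2}·w(t)·v₁(t) for all t ∈ [0, t*]. Then w₁(t*) < 4. -/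
open Set

/-- Along a positive solution `v`, with `v₁ > 0` on `(0,t*]` and
`w < 0` on `[0,t*)`, `w(t*) = 0`, the solution `w₁` of
`w₁' = −k·v^{−k−1}·w₁ + k(k+1)·v^{−k−2}·w·v₁` with `w₁(0) = 4` satisfies `w₁(t*) < 4`. -/
theorem chini_second_variation_bound (k : ℕ) (hk : 1 ≤ k)
    (tstar : ℝ) (htstar : 0 < tstar)
    (v v₁ w w₁ : ℝ → ℝ)
    (hv : ContinuousOn v (Icc 0 tstar)) (hvpos : ∀ t ∈ Icc (0 : ℝ) tstar, 0 < v t)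
    (hv₁ : ContinuousOn v₁ (Icc 0 tstar))
    (hv₁pos : ∀ t ∈ Ioc (0 : ℝ) tstar, 0 < v₁ t)
    (hwcont : ContinuousOn w (Icc 0 tstar))
    (hwneg : ∀ t ∈ Ico (0 : ℝ) tstar, w t < 0) (hwt : w tstar = 0)
    (hw₁0 : w₁ 0 = 4)
    (hw₁ : ∀ t ∈ Icc (0 : ℝ) tstar,
      HasDerivWithinAt w₁
        (-(k : ℝ) * v t ^ (-(k : ℤ) - 1) * w₁ t +
          (k : ℝ) * ((k : ℝ) + 1) * v t ^ (-(k : ℤ) - 2) * w t * v₁ t)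
        (Icc 0 tstar) t) :
    w₁ tstar < 4 := by
  set c : ℝ → ℝ := fun t => (k : ℝ) * v t ^ (-(k : ℤ) - 1) with hc_def
  have hcc : ContinuousOn c (Icc 0 tstar) :=
    continuousOn_const.mul (hv.zpow₀ _ (fun t ht => Or.inl (hvpos t ht).ne'))
  set A : ℝ → ℝ := fun t => ∫ s in (0:ℝ)..t, c s with hA_def
  have hInt : ∀ x ∈ Icc (0:ℝ) tstar, IntervalIntegrable c MeasureTheory.volume 0 x := by
    intro x hx
    exact (hcc.mono (Icc_subset_Icc le_rfl hx.2)).intervalIntegrable_of_Icc hx.1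
  have hAcont : ContinuousOn A (Icc 0 tstar) := by
    have := intervalIntegral.continuousOn_primitive_interval
      (f := c) (μ := MeasureTheory.volume) (a := 0) (b := tstar)
      ((hcc.mono (by rw [uIcc_of_le htstar.le])).integrableOn_compact (isCompact_uIcc))
    rwa [uIcc_of_le htstar.le] at this
  -- derivative of A at interior points
  have hA' : ∀ x ∈ Ioo (0:ℝ) tstar, HasDerivAt A (c x) x := by
    intro x hx
    have hmem : Icc (0:ℝ) tstar ∈ nhds x := Icc_mem_nhds hx.1 hx.2
    have hcx : ContinuousAt c x := hcc.continuousAt hmem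
    exact intervalIntegral.integral_hasDerivAt_right (hInt x (Ioo_subset_Icc_self hx))
      (AEStronglyMeasurable.stronglyMeasurableAtFilter_of_mem
        (hcc.aestronglyMeasurable measurableSet_Icc) hmem) hcx
  set g : ℝ → ℝ := fun t => w₁ t * Real.exp (A t) with hg_def
  have hw₁cont : ContinuousOn w₁ (Icc 0 tstar) := fun t ht => (hw₁ t ht).continuousWithinAt
  have hgcont : ContinuousOn g (Icc 0 tstar) :=
    hw₁cont.mul (Real.continuous_exp.comp_continuousOn hAcont)
  have hg' : ∀ x ∈ Ioo (0:ℝ) tstar, HasDerivAt g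
      ((k : ℝ) * ((k : ℝ) + 1) * v x ^ (-(k : ℤ) - 2) * w x * v₁ x * Real.exp (A x)) x := by
    intro x hx
    have hmem : Icc (0:ℝ) tstar ∈ nhds x := Icc_mem_nhds hx.1 hx.2
    have hw₁x : HasDerivAt w₁ (-(k : ℝ) * v x ^ (-(k : ℤ) - 1) * w₁ x +
        (k : ℝ) * ((k : ℝ) + 1) * v x ^ (-(k : ℤ) - 2) * w x * v₁ x) x :=
      (hw₁ x (Ioo_subset_Icc_self hx)).hasDerivAt hmem
    have hE : HasDerivAt (fun t => Real.exp (A t)) (c x * Real.exp (A x)) x := by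
      simpa [mul_comm, Function.comp_def] using (Real.hasDerivAt_exp (A x)).comp x (hA' x hx)
    have : HasDerivAt (fun t => w₁ t * Real.exp (A t)) _ x := hw₁x.mul hE
    convert this using 1
    simp only [hc_def]
    ring
  have hanti : AntitoneOn g (Icc 0 tstar) := by
    apply antitoneOn_of_deriv_nonpos (convex_Icc 0 tstar) hgcont
    · intro x hx
      rw [interior_Icc] at hx
      exact (hg' x hx).differentiableAt.differentiableWithinAt
    · intro x hx
      rw [interior_Icc] at hx
      rw [(hg' x hx).deriv]
      have hw : w x ≤ 0 := (hwneg x ⟨hx.1.le, hx.2⟩).le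
      have hv₁x : 0 ≤ v₁ x := (hv₁pos x ⟨hx.1, hx.2.le⟩).le
      have hvp : 0 < v x ^ (-(k : ℤ) - 2) :=
        zpow_pos (hvpos x ⟨hx.1.le, hx.2.le⟩) _
      have hkk : (0:ℝ) ≤ (k : ℝ) * ((k : ℝ) + 1) := by positivity
      have : (k : ℝ) * ((k : ℝ) + 1) * v x ^ (-(k : ℤ) - 2) * w x * v₁ x ≤ 0 := by
        have h1 : 0 ≤ (k : ℝ) * ((k : ℝ) + 1) * v x ^ (-(k : ℤ) - 2) := by positivity
        have := mul_nonneg h1 hv₁x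
        nlinarith
      have := mul_nonpos_of_nonpos_of_nonneg this (Real.exp_pos (A x)).le
      linarith
  have hg_le : g tstar ≤ g 0 :=
    hanti (left_mem_Icc.mpr htstar.le) (right_mem_Icc.mpr htstar.le) htstar.le
  have hA0 : A 0 = 0 := by simp [hA_def]
  have hg0 : g 0 = 4 := by simp [hg_def, hA0, hw₁0]
  have hApos : 0 < A tstar := by
    apply intervalIntegral.intervalIntegral_pos_of_pos_on
      (hInt tstar (right_mem_Icc.mpr htstar.le))
    · intro x hx
      have hxI : x ∈ Icc (0:ℝ) tstar := Ioo_subset_Icc_self hx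
      have := hvpos x hxI
      positivity
    · exact htstar
  have hexp : 1 < Real.exp (A tstar) := by
    rw [show (1:ℝ) = Real.exp 0 by simp]
    exact Real.exp_lt_exp.mpr hApos
  by_cases hpos : 0 < w₁ tstar
  · have : w₁ tstar * 1 < w₁ tstar * Real.exp (A tstar) :=
      (mul_lt_mul_iff_right₀ hpos).mpr hexp
    have hgle : w₁ tstar * Real.exp (A tstar) ≤ 4 := by
      simpa [hg_def, hA0, hw₁0] using hg_le
    linarith
  · linarith [not_lt.mp hpos]
end

section
/- There exist constants C > 0 and ε₀ ∈ (0, ν) such that the following holds for every ε₁ ∈ (0, ε₀] and every x₁ with |x₁| ≤ θ·(ε₁/ν)^{2k/(2k+1)}. Set t* = (k/(2k+1))·log(ν/ε₁), and let (ρ, x, ε) : [0, t*] → [0,1]³ be any solution of the system ρ' = −(1/k)·ρ, x' = 2x + ε^k·G(ρ, x, ε), ε' = ((2k+1)/k)·ε with ρ(0) = δ^{1/(2k)}, x(0) = x₁, ε(0) = ε₁. Then ρ(t*) = (ε₁/ν)^{1/(2k+1)}·δ^{1/(2k)}, ε(t*) = ν, and |x(t*) − (ν/ε₁)^{2k/(2k+1)}·x₁|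 ≤ C·ε₁^{1/(2k+1)}·(1 + log(ν/ε₁)). In particular x(t*) equals the value (ε₁/ν)^{−2k/(2k+1)}·x₁ of the linearized flow up to an error tending to 0 as ε₁ → 0. -/
open Set

lemma linODE {T c : ℝ} {f : ℝ → ℝ}
    (hf : ∀ t ∈ Icc (0:ℝ) T, HasDerivWithinAt f (c * f t) (Icc 0 T) t) :
    ∀ t ∈ Icc (0:ℝ) T, f t = f 0 * Real.exp (c * t) := by
  set g : ℝ → ℝ := fun t => f t * Real.exp (-(c * t)) with hg
  have hgd : ∀ t ∈ Icc (0:ℝ) T, HasDerivWithinAt g 0 (Icc 0 T) t := by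
    intro t ht
    have he : HasDerivAt (fun s : ℝ => Real.exp (-(c * s))) (-c * Real.exp (-(c*t))) t := by
      simpa [neg_mul, mul_comm] using (((hasDerivAt_id t).const_mul (-c)).exp)
    have h2 := (hf t ht).mul he.hasDerivWithinAt
    refine (h2 : HasDerivWithinAt g _ (Icc 0 T) t).congr_deriv ?_
    ring
  have hconst := constant_of_has_deriv_right_zero
    (fun t ht => (hgd t ht).continuousWithinAt)
    (fun t ht => (hgd t (Ico_subset_Icc_self ht)).mono_of_mem_nhdsWithin
      (Icc_mem_nhdsGE_of_mem ht))
  intro t ht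
  have h1 := hconst t ht
  simp only [hg, mul_zero, neg_zero, Real.exp_zero, mul_one] at h1
  have h2 : f t * Real.exp (-(c*t)) * Real.exp (c*t) = f 0 * Real.exp (c*t) := by rw [h1]
  rwa [mul_assoc, ← Real.exp_add, neg_add_cancel, Real.exp_zero, mul_one] at h2

set_option maxHeartbeats 4000000 in
/-- Transition map near the hyperbolic point `p_L` of the blown-up
visible fold: for the system `ρ' = −ρ/k`, `x' = 2x + ε^k G(ρ,x,ε)`,
`ε' = ((2k+1)/k) ε` started at `ρ(0) = δ^{1/(2k)}`, `x(0) = x₁`, `ε(0) = ε₁`, with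
`|x₁| ≤ θ (ε₁/ν)^{2k/(2k+1)}`, at time `t* = (k/(2k+1)) log(ν/ε₁)` one has
`ρ(t*) = (ε₁/ν)^{1/(2k+1)} δ^{1/(2k)}`, `ε(t*) = ν`, and
`|x(t*) − (ν/ε₁)^{2k/(2k+1)} x₁| ≤ C ε₁^{1/(2k+1)} (1 + log(ν/ε₁))`. -/
theorem transition_map_pL (k : ℕ) (hk : 1 ≤ k)
    (ν δ : ℝ) (hν : ν ∈ Ioo (0 : ℝ) 1) (hδ : δ ∈ Ioo (0 : ℝ) 1)
    (θ M : ℝ) (hθ : 0 < θ) (hM : 0 < M)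
    (G : ℝ × ℝ × ℝ → ℝ) (hGcont : Continuous G)
    (hG : ∀ ρ ∈ Icc (0 : ℝ) 1, ∀ x : ℝ, ∀ ε ∈ Icc (0 : ℝ) 1,
      |G (ρ, x, ε)| ≤ M * (ρ * ε + ρ ^ k)) :
    ∃ C : ℝ, 0 < C ∧ ∃ ε₀ ∈ Ioo (0 : ℝ) ν, ∀ ε₁ ∈ Ioc (0 : ℝ) ε₀, ∀ x₁ : ℝ,
      |x₁| ≤ θ * (ε₁ / ν) ^ (2 * (k : ℝ) / (2 * (k : ℝ) + 1)) →
      ∀ tstar : ℝ, tstar = (k : ℝ) / (2 * (k : ℝ) + 1) * Real.log (ν / ε₁) →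
      ∀ ρ x ε : ℝ → ℝ,
        (∀ t ∈ Icc (0 : ℝ) tstar,
          ρ t ∈ Icc (0 : ℝ) 1 ∧ x t ∈ Icc (0 : ℝ) 1 ∧ ε t ∈ Icc (0 : ℝ) 1) →
        ρ 0 = δ ^ (1 / (2 * (k : ℝ))) → x 0 = x₁ → ε 0 = ε₁ →
        (∀ t ∈ Icc (0 : ℝ) tstar,
          HasDerivWithinAt ρ (-(1 / (k : ℝ)) * ρ t) (Icc 0 tstar) t ∧
          HasDerivWithinAt x (2 * x t + ε t ^ k * G (ρ t, x t, ε t)) (Icc 0 tstar) t ∧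
          HasDerivWithinAt ε ((2 * (k : ℝ) + 1) / (k : ℝ) * ε t) (Icc 0 tstar) t) →
        (ρ tstar = (ε₁ / ν) ^ (1 / (2 * (k : ℝ) + 1)) * δ ^ (1 / (2 * (k : ℝ))) ∧
         ε tstar = ν ∧
         |x tstar - (ν / ε₁) ^ (2 * (k : ℝ) / (2 * (k : ℝ) + 1)) * x₁|
           ≤ C * ε₁ ^ (1 / (2 * (k : ℝ) + 1)) * (1 + Real.log (ν / ε₁))) := by
  obtain ⟨hν0, hν1⟩ := hν
  obtain ⟨hδ0, hδ1⟩ := hδ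
  have hK1 : (1:ℝ) ≤ (k:ℝ) := by exact_mod_cast hk
  set K : ℝ := (k:ℝ) with hKdef
  have hK0 : (0:ℝ) < K := by linarith
  have h2K1 : (0:ℝ) < 2*K+1 := by linarith
  refine ⟨2*M + 1, by linarith, ν/2, ⟨by linarith, by linarith⟩, ?_⟩
  rintro ε₁ ⟨hε₁0, hε₁le⟩ x₁ hx₁ tstar htstar ρ x ε hbox hρ0 hx0 hε0 hode
  have hε₁ν : ε₁ < ν := by linarith
  have hε₁1 : ε₁ < 1 := by linarith
  set L := Real.log (ν / ε₁) with hLdef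
  have hr1 : 1 < ν / ε₁ := (one_lt_div hε₁0).2 hε₁ν
  have hL0 : 0 < L := Real.log_pos hr1
  have ht0 : 0 < tstar := by
    rw [htstar]
    exact mul_pos (div_pos hK0 h2K1) hL0
  have h0mem : (0:ℝ) ∈ Icc (0:ℝ) tstar := ⟨le_rfl, ht0.le⟩
  have htmem : tstar ∈ Icc (0:ℝ) tstar := ⟨ht0.le, le_rfl⟩
  set l := Real.log ε₁ with hldef
  set n := Real.log ν with hndef
  have hLnl : L = n - l := Real.log_div hν0.ne' hε₁0.ne'
  have hn0 : n < 0 := Real.log_neg hν0 hν1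
  have hl0 : l < 0 := Real.log_neg hε₁0 hε₁1
  -- explicit solutions for ε and ρ
  have hεf := linODE (c := (2*K+1)/K) (fun t ht => (hode t ht).2.2)
  have hρf := linODE (c := -(1/K)) (fun t ht => (hode t ht).1)
  have hεt : ∀ t ∈ Icc (0:ℝ) tstar, ε t = ε₁ * Real.exp ((2*K+1)/K * t) := by
    intro t ht; rw [hεf t ht, hε0]
  set ρ0 : ℝ := δ ^ (1 / (2 * K)) with hρ0def
  have hρt : ∀ t ∈ Icc (0:ℝ) tstar, ρ t = ρ0 * Real.exp (-(1/K) * t) := by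
    intro t ht; rw [hρf t ht, hρ0]
  have hρ0pos : 0 < ρ0 := Real.rpow_pos_of_pos hδ0 _
  have hρ0le1 : ρ0 ≤ 1 := by
    have := (hbox 0 h0mem).1.2
    rwa [hρ0] at this
  -- ε at tstar
  have hεts : ε tstar = ν := by
    rw [hεt tstar htmem, htstar]
    rw [show (2*K+1)/K * (K / (2*K+1) * L) = L by field_simp]
    rw [hLdef, Real.exp_log (div_pos hν0 hε₁0)]
    field_simp
  -- ρ at tstar
  have hρts : ρ tstar = (ε₁ / ν) ^ (1 / (2 * K + 1)) * ρ0 := by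
    rw [hρt tstar htmem, htstar, mul_comm]
    congr 1
    rw [Real.rpow_def_of_pos (div_pos hε₁0 hν0)]
    congr 1
    rw [Real.log_div hε₁0.ne' hν0.ne', ← hldef, ← hndef, hLnl]
    field_simp
    ring
  refine ⟨by rw [hρts], hεts, ?_⟩
  -- the x-component
  set y : ℝ → ℝ := fun t => x t * Real.exp (-(2*t)) with hydef
  have hyd : ∀ t ∈ Icc (0:ℝ) tstar, HasDerivWithinAt y
      (Real.exp (-(2*t)) * (ε t ^ k * G (ρ t, x t, ε t))) (Icc 0 tstar) t := by
    intro t ht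
    have he : HasDerivAt (fun s : ℝ => Real.exp (-(2*s))) (-2 * Real.exp (-(2*t))) t := by
      simpa [neg_mul, mul_comm] using (((hasDerivAt_id t).const_mul (-2:ℝ)).exp)
    have h2 := ((hode t ht).2.1).mul he.hasDerivWithinAt
    refine (h2 : HasDerivWithinAt y _ (Icc 0 tstar) t).congr_deriv ?_
    ring
  set D : ℝ := M * ε₁^k * (ε₁ * Real.exp ((2*K+1)*tstar) + Real.exp ((2*K-2)*tstar)) with hDdef
  have hbound : ∀ t ∈ Ico (0:ℝ) tstar,
      ‖Real.exp (-(2*t)) * (ε t ^ k * G (ρ t, x t, ε t))‖ ≤ D := by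
    intro t ht'
    have ht : t ∈ Icc (0:ℝ) tstar := Ico_subset_Icc_self ht'
    obtain ⟨hρmem, hxmem, hεmem⟩ := hbox t ht
    have hGb := hG (ρ t) hρmem (x t) (ε t) hεmem
    have hεpow : ε t ^ k = ε₁ ^ k * Real.exp ((2*K+1)*t) := by
      rw [hεt t ht, mul_pow, ← Real.exp_nat_mul,
        show (k:ℝ) * ((2*K+1)/K * t) = (2*K+1)*t by rw [← hKdef]; field_simp; try ring]
    have hρpow : ρ t ^ k = ρ0 ^ k * Real.exp (-t) := by
      rw [hρt t ht, mul_pow, ← Real.exp_nat_mul,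
        show (k:ℝ) * (-(1/K) * t) = -t by rw [← hKdef]; field_simp; try ring]
    have hρε : ρ t * ε t = ρ0 * ε₁ * Real.exp (2*t) := by
      rw [hρt t ht, hεt t ht, mul_mul_mul_comm, ← Real.exp_add,
        show -(1/K) * t + (2*K+1)/K * t = 2*t by field_simp; try ring]
    calc ‖Real.exp (-(2*t)) * (ε t ^ k * G (ρ t, x t, ε t))‖
        = Real.exp (-(2*t)) * ε t ^ k * |G (ρ t, x t, ε t)| := by
          rw [Real.norm_eq_abs, abs_mul, abs_mul, abs_of_pos (Real.exp_pos _),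
            abs_of_nonneg (pow_nonneg hεmem.1 k), mul_assoc]
      _ ≤ Real.exp (-(2*t)) * ε t ^ k * (M * (ρ t * ε t + ρ t ^ k)) := by
          exact mul_le_mul_of_nonneg_left hGb
            (mul_nonneg (Real.exp_pos _).le (pow_nonneg hεmem.1 k))
      _ = M * ε₁^k * (ρ0 * ε₁ * (Real.exp (-(2*t)) * Real.exp ((2*K+1)*t) * Real.exp (2*t))
            + ρ0^k * (Real.exp (-(2*t)) * Real.exp ((2*K+1)*t) * Real.exp (-t))) := by
          rw [hεpow, hρpow, hρε]; ring
      _ = M * ε₁^k * (ρ0 * ε₁ * Real.exp ((2*K+1)*t) + ρ0^k * Real.exp ((2*K-2)*t)) := by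
          rw [← Real.exp_add, ← Real.exp_add, ← Real.exp_add,
            show -(2*t) + (2*K+1)*t + 2*t = (2*K+1)*t from by ring,
            show -(2*t) + (2*K+1)*t + -t = (2*K-2)*t from by ring]
      _ ≤ M * ε₁^k * (1 * ε₁ * Real.exp ((2*K+1)*tstar) + 1 * Real.exp ((2*K-2)*tstar)) := by
          have e1 : Real.exp ((2*K+1)*t) ≤ Real.exp ((2*K+1)*tstar) := by
            apply Real.exp_le_exp.2
            have := mul_le_mul_of_nonneg_left ht.2 h2K1.le
            linarith
          have e2 : Real.exp ((2*K-2)*t) ≤ Real.exp ((2*K-2)*tstar) := by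
            apply Real.exp_le_exp.2
            have := mul_le_mul_of_nonneg_left ht.2 (by linarith : (0:ℝ) ≤ 2*K-2)
            linarith
          have hρ0k : ρ0 ^ k ≤ 1 := pow_le_one₀ hρ0pos.le hρ0le1
          have h1 : ρ0 * ε₁ * Real.exp ((2*K+1)*t) ≤ 1 * ε₁ * Real.exp ((2*K+1)*tstar) := by
            apply mul_le_mul _ e1 (Real.exp_pos _).le (by linarith)
            apply mul_le_mul_of_nonneg_right hρ0le1 hε₁0.le
          have h2 : ρ0 ^ k * Real.exp ((2*K-2)*t) ≤ 1 * Real.exp ((2*K-2)*tstar) := by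
            apply mul_le_mul hρ0k e2 (Real.exp_pos _).le (by norm_num)
          have hMε : 0 ≤ M * ε₁^k := by positivity
          exact mul_le_mul_of_nonneg_left (add_le_add h1 h2) hMε
      _ = D := by rw [hDdef]; ring
  have hmv := norm_image_sub_le_of_norm_deriv_le_segment' hyd hbound tstar htmem
  rw [sub_zero] at hmv
  have hy0 : y 0 = x₁ := by simp [hydef, hx0]
  -- rewrite target
  have hRexp : (ν / ε₁ : ℝ) ^ (2 * K / (2 * K + 1)) = Real.exp (2*tstar) := by
    rw [Real.rpow_def_of_pos (div_pos hν0 hε₁0), ← hLdef, htstar]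
    congr 1
    field_simp
  have hee : Real.exp (2*tstar) * Real.exp (-(2*tstar)) = 1 := by
    rw [← Real.exp_add]; simp
  have hkey : x tstar - Real.exp (2*tstar) * x₁ = Real.exp (2*tstar) * (y tstar - y 0) := by
    rw [hy0, hydef]
    simp only []
    rw [mul_sub, ← mul_assoc, mul_comm (Real.exp (2*tstar)) (x tstar), mul_assoc, hee, mul_one]
  have hDnn : 0 ≤ D := by
    rw [hDdef]; positivity
  -- key exponent estimates
  have hc1 : ε₁^k * ε₁ * Real.exp ((2*K+3)*tstar) ≤ ε₁ ^ (1/(2*K+1)) := by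
    have hek : (ε₁:ℝ) ^ k = Real.exp (K * l) := by
      rw [hKdef, hldef, Real.exp_nat_mul, Real.exp_log hε₁0]
    have he1 : (ε₁:ℝ) = Real.exp l := (Real.exp_log hε₁0).symm
    have her : ε₁ ^ (1/(2*K+1)) = Real.exp (l * (1/(2*K+1))) := by
      rw [Real.rpow_def_of_pos hε₁0]
    rw [hek, her]
    rw [he1]
    rw [← Real.exp_add, ← Real.exp_add]
    apply Real.exp_le_exp.2
    rw [htstar, hLnl]
    have hcalc : K*l + l + (2*K+3)*(K/(2*K+1)*(n-l)) - l*(1/(2*K+1))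
        = (2*K^2+3*K)*n/(2*K+1) := by field_simp; ring
    have hnum : (2*K^2+3*K)*n/(2*K+1) ≤ 0 := by
      apply div_nonpos_of_nonpos_of_nonneg _ h2K1.le
      exact mul_nonpos_iff.mpr (Or.inl ⟨by positivity, hn0.le⟩)
    linarith [hcalc, hnum]
  have hc2 : ε₁^k * Real.exp (2*K*tstar) ≤ ε₁ ^ (1/(2*K+1)) := by
    have hek : (ε₁:ℝ) ^ k = Real.exp (K * l) := by
      rw [hKdef, hldef, Real.exp_nat_mul, Real.exp_log hε₁0]
    have her : ε₁ ^ (1/(2*K+1)) = Real.exp (l * (1/(2*K+1))) := by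
      rw [Real.rpow_def_of_pos hε₁0]
    rw [hek, her, ← Real.exp_add]
    apply Real.exp_le_exp.2
    rw [htstar, hLnl]
    have hcalc : K*l + 2*K*(K/(2*K+1)*(n-l)) - l*(1/(2*K+1))
        = ((K-1)*l + 2*K^2*n)/(2*K+1) := by field_simp; ring
    have hnum : ((K-1)*l + 2*K^2*n)/(2*K+1) ≤ 0 := by
      apply div_nonpos_of_nonpos_of_nonneg _ h2K1.le
      have hA : (K-1)*l ≤ 0 := mul_nonpos_iff.mpr (Or.inl ⟨by linarith, hl0.le⟩)
      have hB : 2*K^2*n ≤ 0 := mul_nonpos_iff.mpr (Or.inl ⟨by positivity, hn0.le⟩)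
      linarith
    linarith [hcalc, hnum]
  have htle : tstar ≤ 1 + L := by
    rw [htstar]
    have h1 : K/(2*K+1) ≤ 1 := by rw [div_le_one h2K1]; linarith
    have := mul_le_mul_of_nonneg_right h1 hL0.le
    linarith
  have hpow_nn : (0:ℝ) ≤ ε₁ ^ (1/(2*K+1)) := (Real.rpow_pos_of_pos hε₁0 _).le
  calc |x tstar - (ν / ε₁) ^ (2 * K / (2 * K + 1)) * x₁|
      = Real.exp (2*tstar) * |y tstar - y 0| := by
        rw [hRexp, hkey, abs_mul, abs_of_pos (Real.exp_pos _)]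
    _ ≤ Real.exp (2*tstar) * (D * tstar) := by
        apply mul_le_mul_of_nonneg_left _ (Real.exp_pos _).le
        simpa [Real.norm_eq_abs] using hmv
    _ = tstar * (M * (ε₁^k * ε₁ * (Real.exp (2*tstar) * Real.exp ((2*K+1)*tstar))
          + ε₁^k * (Real.exp (2*tstar) * Real.exp ((2*K-2)*tstar)))) := by
        rw [hDdef]; ring
    _ = tstar * (M * (ε₁^k * ε₁ * Real.exp ((2*K+3)*tstar)
          + ε₁^k * Real.exp (2*K*tstar))) := by
        rw [← Real.exp_add, ← Real.exp_add,
          show 2*tstar + (2*K+1)*tstar = (2*K+3)*tstar from by ring,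
          show 2*tstar + (2*K-2)*tstar = 2*K*tstar from by ring]
    _ ≤ tstar * (M * (ε₁ ^ (1/(2*K+1)) + ε₁ ^ (1/(2*K+1)))) := by
        apply mul_le_mul_of_nonneg_left _ ht0.le
        exact mul_le_mul_of_nonneg_left (add_le_add hc1 hc2) hM.le
    _ = 2*M*tstar * ε₁ ^ (1/(2*K+1)) := by ring
    _ ≤ ((2*M+1) * (1 + L)) * ε₁ ^ (1/(2*K+1)) := by
        have e0 := mul_le_mul_of_nonneg_left htle (by linarith : (0:ℝ) ≤ 2*M)
        exact mul_le_mul_of_nonneg_right (by linarith [e0, hL0]) hpow_nn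
    _ = (2*M+1) * ε₁ ^ (1/(2*K+1)) * (1 + L) := by ring
end

section
/- There exist constants C > 0 and β ∈ (0, δ^{1/(2k)}) such that the following holds for every ρ₁ ∈ (0, β] and every x₁ with |x₁| ≤ η. Set t* = k·log(δ^{1/(2k)}/ρ₁), and let (ρ, x, ε) : [0, t*] → [0,1]³ be any solution of the system ρ' = (1/k)·ρ, x' = −2x + ε^k·G(ρ, x, ε), ε' = −((2k+1)/k)·ε with ρ(0) = ρ₁, x(0) = x₁, ε(0) = ν. Then ρ(t*) = δ^{1/(2k)}, ε(t*) = (ρ₁·δ^{−1/(2k)})^{2k+1}·ν, and |x(t*) − ρ₁^{2k}·δ^{−1}·x₁| ≤ C·ρ₁^{2k+1}·(1 + log(δ^{1/(2k)}/ρ₁)). In particular the transition map in the x-variable is the strong linear contraction x₁ ↦ ρ₁^{2k}·δ^{−1}·x₁ up to a higher-order error. -/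
open Set

private lemma icc_mem_nhds_Ici {T t : ℝ} (ht : t ∈ Ico (0:ℝ) T) :
    Icc (0:ℝ) T ∈ nhdsWithin t (Ici t) := by
  have h1 : Iic T ∈ nhdsWithin t (Ici t) :=
    mem_nhdsWithin_of_mem_nhds (Iic_mem_nhds ht.2)
  filter_upwards [h1, self_mem_nhdsWithin] with y hy1 hy2
  exact ⟨le_trans ht.1 hy2, hy1⟩

private lemma ode_exp {T c x₀ : ℝ} {f : ℝ → ℝ}
    (hf : ∀ t ∈ Icc (0:ℝ) T, HasDerivWithinAt f (c * f t) (Icc 0 T) t)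
    (h0 : f 0 = x₀) : ∀ t ∈ Icc (0:ℝ) T, f t = x₀ * Real.exp (c * t) := by
  intro t ht
  have hcontf : ContinuousOn f (Icc 0 T) := fun u hu => (hf u hu).continuousWithinAt
  set g : ℝ → ℝ := fun u => f u * Real.exp (-c * u) with hg
  have hcontg : ContinuousOn g (Icc 0 T) :=
    hcontf.mul ((Real.continuous_exp.comp (continuous_const.mul continuous_id)).continuousOn)
  have hderiv : ∀ u ∈ Ico (0:ℝ) T, HasDerivWithinAt g 0 (Ici u) u := by
    intro u hu
    have h1 : HasDerivWithinAt f (c * f u) (Ici u) u :=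
      (hf u (Ico_subset_Icc_self hu)).mono_of_mem_nhdsWithin (icc_mem_nhds_Ici hu)
    have h2 : HasDerivAt (fun y : ℝ => Real.exp (-c * y)) (Real.exp (-c * u) * (-c * 1)) u :=
      (HasDerivAt.const_mul (-c) (hasDerivAt_id u)).exp
    have h3 := h1.mul h2.hasDerivWithinAt
    exact h3.congr_deriv (by ring)
  have hgt : g t = g 0 := constant_of_has_deriv_right_zero hcontg hderiv t ht
  have hg0 : g 0 = x₀ := by simp [hg, h0]
  have h : f t * Real.exp (-c * t) = x₀ := by rw [← hg0]; exact hgt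
  have hee : Real.exp (-c * t) * Real.exp (c * t) = 1 := by
    rw [← Real.exp_add]; ring_nf; exact Real.exp_zero
  calc f t = f t * (Real.exp (-c * t) * Real.exp (c * t)) := by rw [hee, mul_one]
    _ = (f t * Real.exp (-c * t)) * Real.exp (c * t) := by ring
    _ = x₀ * Real.exp (c * t) := by rw [h]

set_option maxHeartbeats 1000000 in
/-- Transition map near the hyperbolic point `p_R` of the blown-up
visible fold: for the system `ρ' = ρ/k`, `x' = −2x + ε^k G(ρ,x,ε)`,
`ε' = −((2k+1)/k) ε` started at `ρ(0) = ρ₁`, `x(0) = x₁` with `|x₁| ≤ η`, `ε(0) = ν`,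
at time `t* = k log(δ^{1/(2k)}/ρ₁)` one has `ρ(t*) = δ^{1/(2k)}`,
`ε(t*) = (ρ₁ δ^{−1/(2k)})^{2k+1} ν`, and
`|x(t*) − ρ₁^{2k} δ⁻¹ x₁| ≤ C ρ₁^{2k+1} (1 + log(δ^{1/(2k)}/ρ₁))`. -/
theorem transition_map_pR (k : ℕ) (hk : 1 ≤ k)
    (ν δ : ℝ) (hν : ν ∈ Ioo (0 : ℝ) 1) (hδ : δ ∈ Ioo (0 : ℝ) 1)
    (η M : ℝ) (hη : 0 < η) (hM : 0 < M)
    (G : ℝ × ℝ × ℝ → ℝ) (hGcont : Continuous G)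
    (hG : ∀ ρ ∈ Icc (0 : ℝ) 1, ∀ x : ℝ, ∀ ε ∈ Icc (0 : ℝ) 1,
      |G (ρ, x, ε)| ≤ M * (ρ * ε + ρ ^ k)) :
    ∃ C : ℝ, 0 < C ∧ ∃ β ∈ Ioo (0 : ℝ) (δ ^ (1 / (2 * (k : ℝ)))),
      ∀ ρ₁ ∈ Ioc (0 : ℝ) β, ∀ x₁ : ℝ, |x₁| ≤ η →
      ∀ tstar : ℝ, tstar = (k : ℝ) * Real.log (δ ^ (1 / (2 * (k : ℝ))) / ρ₁) →
      ∀ ρ x ε : ℝ → ℝ,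
        (∀ t ∈ Icc (0 : ℝ) tstar,
          ρ t ∈ Icc (0 : ℝ) 1 ∧ x t ∈ Icc (0 : ℝ) 1 ∧ ε t ∈ Icc (0 : ℝ) 1) →
        ρ 0 = ρ₁ → x 0 = x₁ → ε 0 = ν →
        (∀ t ∈ Icc (0 : ℝ) tstar,
          HasDerivWithinAt ρ ((1 / (k : ℝ)) * ρ t) (Icc 0 tstar) t ∧
          HasDerivWithinAt x (-2 * x t + ε t ^ k * G (ρ t, x t, ε t)) (Icc 0 tstar) t ∧
          HasDerivWithinAt ε (-((2 * (k : ℝ) + 1) / (k : ℝ)) * ε t) (Icc 0 tstar) t) →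
        (ρ tstar = δ ^ (1 / (2 * (k : ℝ))) ∧
         ε tstar = (ρ₁ * δ ^ (-(1 : ℝ) / (2 * (k : ℝ)))) ^ (2 * k + 1) * ν ∧
         |x tstar - ρ₁ ^ (2 * k) * δ⁻¹ * x₁|
           ≤ C * ρ₁ ^ (2 * k + 1) * (1 + Real.log (δ ^ (1 / (2 * (k : ℝ))) / ρ₁))) := by
  obtain ⟨hν0, hν1⟩ := hν
  obtain ⟨hδ0, hδ1⟩ := hδ
  have hk0 : (0:ℝ) < (k:ℝ) := by exact_mod_cast Nat.lt_of_lt_of_le Nat.zero_lt_one hk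
  have hk1 : (1:ℝ) ≤ (k:ℝ) := by exact_mod_cast hk
  have hkne : (k:ℝ) ≠ 0 := ne_of_gt hk0
  set s : ℝ := δ ^ (1 / (2 * (k:ℝ))) with hs
  have hs0 : 0 < s := Real.rpow_pos_of_pos hδ0 _
  have hs1 : s < 1 := Real.rpow_lt_one hδ0.le hδ1 (by positivity)
  have hsδ : s ^ (2 * k) = δ := by
    rw [hs, ← Real.rpow_natCast (δ ^ (1 / (2*(k:ℝ)))) (2*k), ← Real.rpow_mul hδ0.le]
    push_cast
    rw [one_div, inv_mul_cancel₀ (by positivity), Real.rpow_one]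
  have hC0 : (0:ℝ) < 2 * M * (k:ℝ) / δ :=
    div_pos (mul_pos (mul_pos two_pos hM) hk0) hδ0
  refine ⟨2 * M * (k:ℝ) / δ, hC0, s / 2, ⟨by positivity, by linarith⟩, ?_⟩
  intro ρ₁ hρ₁ x₁ hx₁ tstar htstar ρ x ε hbox hρ0 hx0 hε0 hode
  obtain ⟨hρ₁0, hρ₁β⟩ := hρ₁
  have hρ₁s : ρ₁ < s := lt_of_le_of_lt hρ₁β (by linarith)
  have hρ₁1 : ρ₁ ≤ 1 := le_of_lt (lt_trans hρ₁s hs1)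
  set L : ℝ := Real.log (s / ρ₁) with hL
  have hL0 : 0 < L := Real.log_pos ((one_lt_div hρ₁0).mpr hρ₁s)
  have hT : tstar = (k:ℝ) * L := htstar
  have hT0 : 0 ≤ tstar := by rw [hT]; positivity
  have hexpL : Real.exp L = s / ρ₁ := Real.exp_log (by positivity)
  have hexpnegL : Real.exp (-L) = ρ₁ / s := by
    rw [Real.exp_neg, hexpL, inv_div]
  have htmem : tstar ∈ Icc (0:ℝ) tstar := ⟨hT0, le_refl _⟩
  -- explicit formulas for ρ and ε
  have hρfor : ∀ t ∈ Icc (0:ℝ) tstar, ρ t = ρ₁ * Real.exp ((1/(k:ℝ)) * t) :=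
    ode_exp (fun t ht => (hode t ht).1) hρ0
  have hεfor : ∀ t ∈ Icc (0:ℝ) tstar,
      ε t = ν * Real.exp (-((2*(k:ℝ)+1)/(k:ℝ)) * t) :=
    ode_exp (fun t ht => (hode t ht).2.2) hε0
  -- value of ρ at tstar
  have hρT : ρ tstar = s := by
    rw [hρfor tstar htmem, hT]
    have h1 : (1/(k:ℝ)) * ((k:ℝ) * L) = L := by field_simp
    rw [h1, hexpL]
    field_simp
  -- value of ε at tstar
  have hδs : δ ^ (-(1:ℝ) / (2 * (k:ℝ))) = s⁻¹ := by
    rw [hs, ← Real.rpow_neg hδ0.le]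
    congr 1
    ring
  have hεT : ε tstar = (ρ₁ * δ ^ (-(1:ℝ) / (2 * (k:ℝ)))) ^ (2 * k + 1) * ν := by
    rw [hεfor tstar htmem, hT, hδs]
    have h1 : -((2*(k:ℝ)+1)/(k:ℝ)) * ((k:ℝ) * L) = ((2*k+1 : ℕ):ℝ) * (-L) := by
      push_cast; field_simp
    rw [h1, Real.exp_nat_mul, hexpnegL]
    rw [div_eq_mul_inv]
    ring
  refine ⟨hρT, hεT, ?_⟩
  -- the x estimate
  set A : ℝ := M * (ρ₁ * ν^(k+1) + ρ₁^k * ν^k) with hA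
  set u : ℝ → ℝ := fun t => x t * Real.exp (2*t) with hu
  have hcontx : ContinuousOn x (Icc 0 tstar) := fun v hv => ((hode v hv).2.1).continuousWithinAt
  have hcontu : ContinuousOn u (Icc 0 tstar) :=
    hcontx.mul ((Real.continuous_exp.comp (continuous_const.mul continuous_id)).continuousOn)
  have hu' : ∀ t ∈ Ico (0:ℝ) tstar,
      HasDerivWithinAt u (Real.exp (2*t) * (ε t ^ k * G (ρ t, x t, ε t))) (Ici t) t := by
    intro t ht
    have hx' : HasDerivWithinAt x (-2 * x t + ε t ^ k * G (ρ t, x t, ε t)) (Ici t) t :=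
      ((hode t (Ico_subset_Icc_self ht)).2.1).mono_of_mem_nhdsWithin (icc_mem_nhds_Ici ht)
    have he : HasDerivAt (fun y : ℝ => Real.exp (2*y)) (Real.exp (2*t) * (2*1)) t :=
      (HasDerivAt.const_mul (2:ℝ) (hasDerivAt_id t)).exp
    have h3 := hx'.mul he.hasDerivWithinAt
    exact h3.congr_deriv (by ring)
  have hbound : ∀ t ∈ Ico (0:ℝ) tstar,
      ‖Real.exp (2*t) * (ε t ^ k * G (ρ t, x t, ε t))‖ ≤ A := by
    intro t ht
    have ht' : t ∈ Icc (0:ℝ) tstar := Ico_subset_Icc_self ht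
    obtain ⟨hρbox, hxbox, hεbox⟩ := hbox t ht'
    have hεnn : 0 ≤ ε t := hεbox.1
    have hρf := hρfor t ht'
    have hεf := hεfor t ht'
    have hεν : ε t ≤ ν := by
      rw [hεf]
      have hle : Real.exp (-((2*(k:ℝ)+1)/(k:ℝ)) * t) ≤ 1 := by
        rw [Real.exp_le_one_iff]
        have h1 : 0 ≤ ((2*(k:ℝ)+1)/(k:ℝ)) * t :=
          mul_nonneg (by positivity) ht.1
        linarith [neg_mul ((2*(k:ℝ)+1)/(k:ℝ)) t]
      nlinarith
    have hρε : ρ t * ε t = ρ₁ * ν * Real.exp (-(2*t)) := by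
      rw [hρf, hεf, mul_mul_mul_comm, ← Real.exp_add]
      congr 1
      congr 1
      linear_combination (-2*t) * mul_inv_cancel₀ hkne
    have hee : Real.exp (2*t) * Real.exp (-(2*t)) = 1 := by
      rw [← Real.exp_add]; ring_nf; exact Real.exp_zero
    have key1 : Real.exp (2*t) * (ρ t * ε t) = ρ₁ * ν := by
      rw [hρε]
      calc Real.exp (2*t) * (ρ₁ * ν * Real.exp (-(2*t)))
          = ρ₁ * ν * (Real.exp (2*t) * Real.exp (-(2*t))) := by ring
        _ = ρ₁ * ν := by rw [hee, mul_one]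
    have key2 : Real.exp (2*t) * (ρ t * ε t)^k ≤ ρ₁^k * ν^k := by
      rw [hρε, mul_pow, mul_pow]
      have h2 : Real.exp (2*t) * Real.exp (-(2*t))^k ≤ 1 := by
        rw [← Real.exp_nat_mul, ← Real.exp_add, Real.exp_le_one_iff]
        nlinarith [ht.1, hk1]
      calc Real.exp (2*t) * (ρ₁^k * ν^k * Real.exp (-(2*t))^k)
          = (ρ₁^k * ν^k) * (Real.exp (2*t) * Real.exp (-(2*t))^k) := by ring
        _ ≤ (ρ₁^k * ν^k) * 1 := by
            apply mul_le_mul_of_nonneg_left h2 (by positivity)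
        _ = ρ₁^k * ν^k := mul_one _
    have hGb := hG (ρ t) hρbox (x t) (ε t) hεbox
    rw [Real.norm_eq_abs, abs_mul, abs_mul,
      abs_of_pos (Real.exp_pos _), abs_of_nonneg (pow_nonneg hεnn k)]
    calc Real.exp (2*t) * (ε t ^ k * |G (ρ t, x t, ε t)|)
        ≤ Real.exp (2*t) * (ε t ^ k * (M * (ρ t * ε t + ρ t ^ k))) := by
          apply mul_le_mul_of_nonneg_left
            (mul_le_mul_of_nonneg_left hGb (pow_nonneg hεnn k)) (Real.exp_pos _).le
      _ = M * ((Real.exp (2*t) * (ρ t * ε t)) * ε t ^ k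
            + Real.exp (2*t) * (ρ t * ε t)^k) := by
          rw [mul_pow]; ring
      _ ≤ M * ((ρ₁ * ν) * ν^k + ρ₁^k * ν^k) := by
          apply mul_le_mul_of_nonneg_left _ hM.le
          have e1 : (Real.exp (2*t) * (ρ t * ε t)) * ε t ^ k ≤ (ρ₁ * ν) * ν^k := by
            rw [key1]
            exact mul_le_mul_of_nonneg_left (pow_le_pow_left₀ hεnn hεν k) (by positivity)
          linarith [key2]
      _ = A := by rw [hA]; ring
  have hmain := norm_image_sub_le_of_norm_deriv_right_le_segment hcontu hu' hbound tstar htmem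
  have hu0 : u 0 = x₁ := by simp [hu, hx0]
  have hfT : |x tstar * Real.exp (2*tstar) - x₁| ≤ A * tstar := by
    have := hmain
    rw [hu0] at this
    simpa [hu, Real.norm_eq_abs] using this
  -- translate to the desired estimate
  have hexpT : Real.exp (-(2*tstar)) = ρ₁^(2*k) * δ⁻¹ := by
    rw [hT]
    have h1 : -(2*((k:ℝ)*L)) = ((2*k : ℕ):ℝ) * (-L) := by push_cast; ring
    rw [h1, Real.exp_nat_mul, hexpnegL, div_pow, hsδ, div_eq_mul_inv]
  have hee : Real.exp (-(2*tstar)) * Real.exp (2*tstar) = 1 := by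
    rw [← Real.exp_add]; ring_nf; exact Real.exp_zero
  have key : x tstar - ρ₁^(2*k) * δ⁻¹ * x₁
      = Real.exp (-(2*tstar)) * (x tstar * Real.exp (2*tstar) - x₁) := by
    rw [← hexpT]
    linear_combination (-(x tstar)) * hee
  have hEpos : 0 < Real.exp (-(2*tstar)) := Real.exp_pos _
  have hstep : |x tstar - ρ₁^(2*k) * δ⁻¹ * x₁| ≤ Real.exp (-(2*tstar)) * (A * tstar) := by
    rw [key, abs_mul, abs_of_pos hEpos]
    exact mul_le_mul_of_nonneg_left hfT hEpos.le
  have hAle : A ≤ 2 * M * ρ₁ := by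
    have h1 : ν^(k+1) ≤ 1 := pow_le_one₀ hν0.le hν1.le
    have h2 : ν^k ≤ 1 := pow_le_one₀ hν0.le hν1.le
    have h3 : ρ₁^k ≤ ρ₁ := pow_le_of_le_one hρ₁0.le hρ₁1 (by omega)
    have h4 : ρ₁ * ν^(k+1) ≤ ρ₁ := by nlinarith
    have h5 : ρ₁^k * ν^k ≤ ρ₁ := by nlinarith [pow_nonneg hρ₁0.le k, pow_nonneg hν0.le k]
    rw [hA]; nlinarith
  have hA0 : 0 ≤ A := by
    rw [hA]; positivity
  calc |x tstar - ρ₁^(2*k) * δ⁻¹ * x₁|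
      ≤ Real.exp (-(2*tstar)) * (A * tstar) := hstep
    _ = (ρ₁^(2*k) * δ⁻¹) * (A * ((k:ℝ) * L)) := by rw [hexpT, hT]
    _ ≤ (ρ₁^(2*k) * δ⁻¹) * ((2 * M * ρ₁) * ((k:ℝ) * L)) := by
        apply mul_le_mul_of_nonneg_left _ (by positivity)
        exact mul_le_mul_of_nonneg_right hAle (by positivity)
    _ = (2 * M * (k:ℝ) / δ) * ρ₁^(2*k+1) * L := by
        rw [pow_succ]
        field_simp
    _ ≤ (2 * M * (k:ℝ) / δ) * ρ₁^(2*k+1) * (1 + L) := by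
        apply mul_le_mul_of_nonneg_left (by linarith) (by positivity)
end
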